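/- arXiv:2603.24707 — 2 statements merged into one kernel-verified Lean document; each statement's English description precedes it below -/
import Mathlib

section
/- If g : Δ_j → ℝ is continuously differentiable on Δ_j, then |∫_{t_{j-1}}^{t_j} g(t) Φ_j(t) dt| ≤ (sup_{t∈Δ_j} |g'(t)|) · h^{2r+3}. -/
open Set MeasureTheory

/-- Equidistant interpolation nodes: `τ_j^i = t_{j-1} + i·h/(2r)` with `h = 1/n`. -/
noncomputable def tau (n r j i : ℕ) : ℝ :=
  ((j : ℝ) - 1) / n + (i : ℝ) / (2 * r * n)

/-- The unique polynomial of degree ≤ 2r interpolating `x` at the nodes of `Δ_j`. -/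
noncomputable def interpPoly (n r j : ℕ) (x : ℝ → ℝ) : Polynomial ℝ :=
  Lagrange.interpolate (Finset.range (2 * r + 1)) (tau n r j) (fun i => x (tau n r j i))

/-- The interpolatory projection `Q_n x`: on each subinterval `Δ_j = [(j-1)/n, j/n]` it
coincides with the polynomial of degree ≤ 2r interpolating `x` at the nodes `τ_j^i`.
(At a partition point both adjacent pieces take the value `x(t_j)`.) -/
noncomputable def Qn (n r : ℕ) (x : ℝ → ℝ) (t : ℝ) : ℝ :=
  (interpPoly n r (min n (⌊t * (n : ℝ)⌋₊ + 1)) x).eval t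

/-- The Fredholm integral operator with kernel `κ`. -/
noncomputable def Kop (κ : ℝ → ℝ → ℝ) (x : ℝ → ℝ) (s : ℝ) : ℝ :=
  ∫ t in (0:ℝ)..1, κ s t * x t

/-- Supremum norm on `[0,1]`. -/
noncomputable def supNorm (f : ℝ → ℝ) : ℝ :=
  ⨆ t : Set.Icc (0:ℝ) 1, |f t.1|

/-- The nodal polynomial `Φ_j(t) = ∏_{i=0}^{2r} (t − τ_j^i)`. -/
noncomputable def Phi (n r j : ℕ) (t : ℝ) : ℝ :=
  ∏ i ∈ Finset.range (2 * r + 1), (t - tau n r j i)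

/-- `‖x‖_{k,∞} = max_{0 ≤ i ≤ k} ‖x^{(i)}‖_∞` (derivatives taken within `[0,1]`). -/
noncomputable def cknorm (k : ℕ) (x : ℝ → ℝ) : ℝ :=
  ⨆ i : Fin (k + 1), supNorm (iteratedDerivWithin i x (Set.Icc 0 1))

open scoped Interval

/-!
The nodes are symmetric about the midpoint `c` of `Δ_j` and there is an odd number of them,
so `Φ_j` is odd about `c` and `∫_{Δ_j} Φ_j = 0`. Hence `g` may be replaced by `g - g c`, which
is bounded by `(h / 2) · sup |g'|` by the mean value inequality, while `|Φ_j| ≤ h ^ (2r+1)`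
on `Δ_j`; integrating over an interval of length `h` gives the bound with a spare factor `1/2`.
-/

theorem intervalIntegral.integral_eq_zero_of_odd_about_midpoint {E : Type*}
    [NormedAddCommGroup E] [NormedSpace ℝ E] {f : ℝ → E} {a b : ℝ}
    (hf : ∀ t, f (a + b - t) = -f t) :
    ∫ t in a..b, f t = 0 := by
  have : IsAddTorsionFree E := .of_isTorsionFree ℝ E
  have h := intervalIntegral.integral_comp_sub_left f (a + b) (a := a) (b := b)
  rw [add_sub_cancel_right, add_sub_cancel_left] at h
  simp only [hf, intervalIntegral.integral_neg] at h
  exact neg_eq_self.mp h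

theorem abs_le_iSup_abs_of_continuousOn {α : Type*} [TopologicalSpace α] {f : α → ℝ}
    {s : Set α} (hs : IsCompact s) (hf : ContinuousOn f s) {t : α} (ht : t ∈ s) :
    |f t| ≤ ⨆ x : s, |f x| := by
  refine le_ciSup (f := fun x : s => |f x|) ?_ ⟨t, ht⟩
  simpa only [image_eq_range] using (hs.image_of_continuousOn hf.abs).bddAbove

theorem abs_integral_mul_le_of_integral_eq_zero {f f' φ : ℝ → ℝ} {a b M B : ℝ} (hab : a ≤ b)
    (hf : ∀ t ∈ Icc a b, HasDerivWithinAt f (f' t) (Icc a b) t)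
    (hf' : ∀ t ∈ Icc a b, |f' t| ≤ M) (hφ : IntervalIntegrable φ volume a b)
    (hφB : ∀ t ∈ Icc a b, |φ t| ≤ B) (hφ0 : ∫ t in a..b, φ t = 0) :
    |∫ t in a..b, f t * φ t| ≤ M * B * (b - a) ^ 2 / 2 := by
  set c := (a + b) / 2 with hc_def
  have hc : c ∈ Icc a b := ⟨by linarith, by linarith⟩
  have hM : 0 ≤ M := (abs_nonneg _).trans (hf' a (left_mem_Icc.mpr hab))
  have hosc : ∀ t ∈ Icc a b, |f t - f c| ≤ M * ((b - a) / 2) := by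
    intro t ht
    have hmvt := (convex_Icc a b).norm_image_sub_le_of_norm_hasDerivWithin_le hf
      (by simpa only [Real.norm_eq_abs] using hf') hc ht
    rw [Real.norm_eq_abs, Real.norm_eq_abs] at hmvt
    refine hmvt.trans (mul_le_mul_of_nonneg_left ?_ hM)
    rw [abs_sub_le_iff]
    constructor <;> linarith [ht.1, ht.2, hc_def]
  have hfc : ContinuousOn f [[a, b]] := by
    rw [uIcc_of_le hab]
    exact fun t ht => (hf t ht).continuousWithinAt
  have hcentre : ∫ t in a..b, f t * φ t = ∫ t in a..b, (f t - f c) * φ t := by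
    simp_rw [sub_mul]
    rw [intervalIntegral.integral_sub (hφ.continuousOn_mul hfc) (hφ.const_mul _),
      intervalIntegral.integral_const_mul, hφ0, mul_zero, sub_zero]
  have hbound : ∀ t ∈ Ι a b, ‖(f t - f c) * φ t‖ ≤ M * ((b - a) / 2) * B := by
    intro t ht
    rw [uIoc_of_le hab] at ht
    rw [Real.norm_eq_abs, abs_mul]
    exact mul_le_mul (hosc t (Ioc_subset_Icc_self ht)) (hφB t (Ioc_subset_Icc_self ht))
      (abs_nonneg _) (by positivity)
  calc |∫ t in a..b, f t * φ t| ≤ M * ((b - a) / 2) * B * |b - a| := by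
        rw [hcentre, ← Real.norm_eq_abs]
        exact intervalIntegral.norm_integral_le_of_norm_le_const hbound
    _ = M * B * (b - a) ^ 2 / 2 := by rw [abs_of_nonneg (sub_nonneg.mpr hab)]; ring

section NodalPolynomial

variable {n r j : ℕ}

theorem tau_mem_Icc {i : ℕ} (hi : i ≤ 2 * r) :
    tau n r j i ∈ Icc (((j : ℝ) - 1) / n) ((j : ℝ) / n) := by
  have hfrac : (i : ℝ) / (2 * r) ≤ 1 := div_le_one_of_le₀ (by exact_mod_cast hi) (by positivity)
  have htau : tau n r j i = ((j : ℝ) - 1) / n + (i : ℝ) / (2 * r) * (1 / n) := by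
    rw [tau, div_mul_div_comm, mul_one]
  have hb : (j : ℝ) / n = ((j : ℝ) - 1) / n + 1 / n := by ring
  rw [htau, hb]
  constructor
  · have : 0 ≤ (i : ℝ) / (2 * r) * (1 / n) := by positivity
    linarith
  · have : (i : ℝ) / (2 * r) * (1 / n) ≤ 1 / n := mul_le_of_le_one_left (by positivity) hfrac
    linarith

theorem abs_Phi_le {t : ℝ} (ht : t ∈ Icc (((j : ℝ) - 1) / n) ((j : ℝ) / n)) :
    |Phi n r j t| ≤ (1 / (n : ℝ)) ^ (2 * r + 1) := by
  rw [Phi, Finset.abs_prod]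
  refine (Finset.prod_le_prod (fun i _ => abs_nonneg (t - tau n r j i)) fun i hi => ?_)
    |>.trans_eq (by rw [Finset.prod_const, Finset.card_range])
  have hτ := tau_mem_Icc (n := n) (j := j) (Nat.lt_succ_iff.mp (Finset.mem_range.mp hi))
  calc |t - tau n r j i| ≤ (j : ℝ) / n - ((j : ℝ) - 1) / n := Real.dist_le_of_mem_Icc ht hτ
    _ = 1 / n := by ring

theorem tau_reflect (hn : 0 < n) (hr : 0 < r) {i : ℕ} (hi : i ≤ 2 * r) :
    ((j : ℝ) - 1) / n + (j : ℝ) / n - tau n r j i = tau n r j (2 * r - i) := by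
  rw [tau, tau, Nat.cast_sub hi]
  field_simp
  push_cast
  ring

theorem Phi_reflect (hn : 0 < n) (hr : 0 < r) (t : ℝ) :
    Phi n r j (((j : ℝ) - 1) / n + (j : ℝ) / n - t) = -Phi n r j t := by
  have hnodes : ∀ i ∈ Finset.range (2 * r + 1),
      ((j : ℝ) - 1) / n + (j : ℝ) / n - t - tau n r j i = -(t - tau n r j (2 * r - i)) := by
    intro i hi
    rw [← tau_reflect hn hr (Nat.lt_succ_iff.mp (Finset.mem_range.mp hi))]
    ring
  rw [Phi, Finset.prod_congr rfl hnodes, Finset.prod_neg, Finset.card_range,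
    (odd_two_mul_add_one r).neg_one_pow, neg_one_mul, Phi,
    ← Finset.prod_range_reflect (fun i => t - tau n r j i), add_tsub_cancel_right]

theorem continuous_Phi : Continuous (Phi n r j) := by
  unfold Phi
  fun_prop

theorem integral_Phi_eq_zero (hn : 0 < n) (hr : 0 < r) :
    ∫ t in ((j : ℝ) - 1) / n..(j : ℝ) / n, Phi n r j t = 0 :=
  intervalIntegral.integral_eq_zero_of_odd_about_midpoint (Phi_reflect hn hr)

end NodalPolynomial

theorem stmt_9_general (n r : ℕ) (hn : 1 ≤ n) (hr : 1 ≤ r) (j : ℕ)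
    (g g' : ℝ → ℝ)
    (hg : ∀ t ∈ Set.Icc (((j : ℝ) - 1) / n) ((j : ℝ) / n),
      HasDerivWithinAt g (g' t) (Set.Icc (((j : ℝ) - 1) / n) ((j : ℝ) / n)) t)
    (hg' : ContinuousOn g' (Set.Icc (((j : ℝ) - 1) / n) ((j : ℝ) / n))) :
    |∫ t in (((j : ℝ) - 1) / n)..((j : ℝ) / n), g t * Phi n r j t| ≤
      (⨆ t : Set.Icc (((j : ℝ) - 1) / n) ((j : ℝ) / n), |g' t.1|) *
        ((1 : ℝ) / n) ^ (2 * r + 3) := by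
  set M := ⨆ t : Set.Icc (((j : ℝ) - 1) / n) ((j : ℝ) / n), |g' t.1|
  have hab : ((j : ℝ) - 1) / n ≤ (j : ℝ) / n := by gcongr; linarith
  have hg'_le : ∀ t ∈ Icc (((j : ℝ) - 1) / n) ((j : ℝ) / n), |g' t| ≤ M :=
    fun _ => abs_le_iSup_abs_of_continuousOn isCompact_Icc hg'
  have hM : 0 ≤ M := (abs_nonneg _).trans (hg'_le _ (left_mem_Icc.mpr hab))
  have hlen : (j : ℝ) / n - ((j : ℝ) - 1) / n = 1 / n := by ring
  calc _ ≤ M * (1 / (n : ℝ)) ^ (2 * r + 1) * (1 / n) ^ 2 / 2 := by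
        simpa only [hlen] using abs_integral_mul_le_of_integral_eq_zero hab hg hg'_le
          (continuous_Phi.intervalIntegrable _ _) (fun _ => abs_Phi_le)
          (integral_Phi_eq_zero hn hr)
    _ ≤ M * (1 / (n : ℝ)) ^ (2 * r + 3) := by
        rw [mul_assoc, ← pow_add]
        have : 0 ≤ M * (1 / (n : ℝ)) ^ (2 * r + 1 + 2) := by positivity
        linarith

theorem stmt_9 (n r : ℕ) (hn : 1 ≤ n) (hr : 1 ≤ r) (j : ℕ) (hj1 : 1 ≤ j) (hjn : j ≤ n)
    (g g' : ℝ → ℝ)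
    (hg : ∀ t ∈ Set.Icc (((j : ℝ) - 1) / n) ((j : ℝ) / n),
      HasDerivWithinAt g (g' t) (Set.Icc (((j : ℝ) - 1) / n) ((j : ℝ) / n)) t)
    (hg' : ContinuousOn g' (Set.Icc (((j : ℝ) - 1) / n) ((j : ℝ) / n))) :
    |∫ t in (((j : ℝ) - 1) / n)..((j : ℝ) / n), g t * Phi n r j t| ≤
      (⨆ t : Set.Icc (((j : ℝ) - 1) / n) ((j : ℝ) / n), |g' t.1|) *
        ((1 : ℝ) / n) ^ (2 * r + 3) :=
  stmt_9_general n r hn hr j g g' hg hg'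
end

section
/- Suppose all partial derivatives D^{(α,β)}κ = ∂^{α+β}κ/∂s^α∂t^β with 0 ≤ α+β ≤ 2r+3 exist, are continuous on [0,1]×[0,1], and satisfy |D^{(α,β)}κ(s,t)| ≤ C₂. Then there exists a constant C₃ > 0, depending only on r and C₂ and independent of n, such that for every (2r+2)-times continuously differentiable x : [0,1] → ℝ, ‖(K(x − Q_n x))^{(2r+1)}‖_∞ ≤ C₃ ‖x‖_{2r+2,∞} h^{2r+2}. -/
/-!
Write `e = x - Q_n x` and `F_α(s) = ∫₀¹ D^{(α,0)}κ(s,t) e(t) dt`. Since `e` and `D^{(α+2,0)}κ` are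
bounded, a second-order Taylor bound in `s` lets us differentiate under the integral, so
`(K e)^{(2r+1)} = F_{2r+1}`, and it remains to bound `∫_{Δ_j} g e` for `g = D^{(2r+1,0)}κ(s,·)`,
which is `C₂`-Lipschitz.

On `Δ_j` let `P` be the Taylor polynomial of `x` of degree `2r+1`. Replacing `x` by `P` costs
`O(h^{2r+2})`, both directly and, through the Lebesgue constant, inside the interpolant; and
`P - Q_n P = c Φ_j` with `|c| ≤ ‖x^{(2r+1)}‖_∞`. The `2r+1` equispaced nodes are symmetric about
the midpoint of `Δ_j`, so `Φ_j` is odd about it and `∫_{Δ_j} Φ_j = 0`. Hence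
`∫_{Δ_j} g Φ_j = ∫_{Δ_j} (g - g(t_{j-1})) Φ_j = O(h · h^{2r+1} · h)`, and summing over the `n`
cells gives `O(h^{2r+2})`.
-/

open Set MeasureTheory

open Asymptotics Topology

lemma supNorm_le {f : ℝ → ℝ} {M : ℝ} (h : ∀ t ∈ Icc (0 : ℝ) 1, |f t| ≤ M) :
    supNorm f ≤ M :=
  ciSup_le fun t => h t.1 t.2

lemma le_supNorm {f : ℝ → ℝ} (hf : ContinuousOn f (Icc 0 1)) {t : ℝ}
    (ht : t ∈ Icc (0 : ℝ) 1) : |f t| ≤ supNorm f := by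
  obtain ⟨M, hM⟩ := isCompact_Icc.exists_bound_of_continuousOn hf
  unfold supNorm
  refine le_ciSup (f := fun u : Icc (0 : ℝ) 1 => |f u.1|) ⟨M, ?_⟩ ⟨t, ht⟩
  rintro _ ⟨u, rfl⟩
  exact hM u.1 u.2

lemma supNorm_le_cknorm {k i : ℕ} (hik : i ≤ k) (x : ℝ → ℝ) :
    supNorm (iteratedDerivWithin i x (Icc 0 1)) ≤ cknorm k x := by
  unfold cknorm
  exact le_ciSup (f := fun i : Fin (k + 1) => supNorm (iteratedDerivWithin i x (Icc 0 1)))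
    (Set.finite_range _).bddAbove ⟨i, Nat.lt_succ_of_le hik⟩

lemma iteratedDerivWithin_subset {f : ℝ → ℝ} {s t : Set ℝ} {N : ℕ} (hst : s ⊆ t)
    (hs : UniqueDiffOn ℝ s) (ht : UniqueDiffOn ℝ t) (hf : ContDiffOn ℝ N f t) {y : ℝ}
    (hy : y ∈ s) : iteratedDerivWithin N f s y = iteratedDerivWithin N f t y := by
  simp only [iteratedDerivWithin_eq_iteratedFDerivWithin,
    iteratedFDerivWithin_subset hst hs ht hf hy]

lemma abs_iteratedDerivWithin_le_cknorm {k i : ℕ} (hik : i ≤ k) {x : ℝ → ℝ}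
    (hx : ContDiffOn ℝ k x (Icc 0 1)) {a b : ℝ} (hab : a < b) (hsub : Icc a b ⊆ Icc 0 1)
    {y : ℝ} (hy : y ∈ Icc a b) : |iteratedDerivWithin i x (Icc a b) y| ≤ cknorm k x := by
  rw [iteratedDerivWithin_subset hsub (uniqueDiffOn_Icc hab) (uniqueDiffOn_Icc one_pos)
    (hx.of_le (by exact_mod_cast hik)) hy]
  exact (le_supNorm (hx.continuousOn_iteratedDerivWithin (by exact_mod_cast hik)
    (uniqueDiffOn_Icc one_pos)) (hsub hy)).trans (supNorm_le_cknorm hik x)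

lemma cknorm_nonneg {k : ℕ} {x : ℝ → ℝ} (hx : ContDiffOn ℝ k x (Icc 0 1)) :
    0 ≤ cknorm k x :=
  (abs_nonneg _).trans (abs_iteratedDerivWithin_le_cknorm (Nat.zero_le k) hx one_pos
    subset_rfl (left_mem_Icc.mpr zero_le_one))

lemma abs_le_cknorm {k : ℕ} {x : ℝ → ℝ} (hx : ContDiffOn ℝ k x (Icc 0 1)) {t : ℝ}
    (ht : t ∈ Icc (0 : ℝ) 1) : |x t| ≤ cknorm k x := by
  simpa using abs_iteratedDerivWithin_le_cknorm (Nat.zero_le k) hx one_pos subset_rfl ht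

lemma abs_sub_sub_mul_le_of_hasDerivWithinAt {f f' f'' : ℝ → ℝ} {s : Set ℝ}
    (hs : Convex ℝ s) {C : ℝ} (hf : ∀ u ∈ s, HasDerivWithinAt f (f' u) s u)
    (hf' : ∀ u ∈ s, HasDerivWithinAt f' (f'' u) s u) (hC : ∀ u ∈ s, |f'' u| ≤ C)
    {x y : ℝ} (hx : x ∈ s) (hy : y ∈ s) :
    |f y - f x - (y - x) * f' x| ≤ C * (y - x) ^ 2 := by
  have hseg : uIcc x y ⊆ s := hs.ordConnected.uIcc_subset hx hy
  have hD : ∀ u ∈ uIcc x y, HasDerivWithinAt (fun u => f u - f x - (u - x) * f' x)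
      (f' u - f' x) (uIcc x y) u := fun u hu =>
    (((hf u (hseg hu)).mono hseg).sub_const _).sub (by
      simpa using ((hasDerivWithinAt_id u _).sub_const x).mul_const (f' x))
  have hB : ∀ u ∈ uIcc x y, ‖f' u - f' x‖ ≤ C * |y - x| := fun u hu =>
    (hs.norm_image_sub_le_of_norm_hasDerivWithin_le hf' hC hx (hseg hu)).trans
      (mul_le_mul_of_nonneg_left (abs_sub_left_of_mem_uIcc hu)
        ((abs_nonneg _).trans (hC x hx)))
  have := (convex_uIcc x y).norm_image_sub_le_of_norm_hasDerivWithin_le hD hB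
    left_mem_uIcc right_mem_uIcc
  simp only [sub_self, zero_mul, sub_zero, Real.norm_eq_abs] at this
  rwa [mul_assoc, ← sq, sq_abs] at this

lemma hasDerivWithinAt_of_abs_sub_sub_le {F : ℝ → ℝ} {F' C x : ℝ} {s : Set ℝ}
    (h : ∀ y ∈ s, |F y - F x - (y - x) * F'| ≤ C * (y - x) ^ 2) :
    HasDerivWithinAt F F' s x := by
  rw [hasDerivWithinAt_iff_isLittleO]
  have hO : (fun y => F y - F x - (y - x) • F') =O[𝓝[s] x] fun y => ‖y - x‖ ^ 2 :=
    IsBigO.of_bound C <| eventually_nhdsWithin_of_forall fun y hy => by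
      simpa [smul_eq_mul, sq_abs] using h y hy
  exact hO.trans_isLittleO ((isLittleO_pow_sub_sub x one_lt_two).mono nhdsWithin_le_nhds)

lemma eqOn_iteratedDerivWithin_of_hasDerivWithinAt {F : ℕ → ℝ → ℝ} {s : Set ℝ}
    (hs : UniqueDiffOn ℝ s) {N : ℕ}
    (hF : ∀ m < N, ∀ y ∈ s, HasDerivWithinAt (F m) (F (m + 1) y) s y) :
    ∀ k ≤ N, EqOn (iteratedDerivWithin k (F 0) s) (F k) s := by
  intro k
  induction k with
  | zero => intro _ y _; simp
  | succ m ih =>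
    intro hm y hy
    rw [iteratedDerivWithin_succ, derivWithin_congr (ih (by omega)) (ih (by omega) hy)]
    exact (hF m hm y hy).derivWithin (hs y hy)

lemma hasDerivWithinAt_integral_mul {k k' k'' : ℝ → ℝ → ℝ} {e : ℝ → ℝ} {B C : ℝ}
    (he : IntervalIntegrable e volume 0 1) (heB : ∀ t ∈ Icc (0 : ℝ) 1, |e t| ≤ B)
    (hk : ∀ s ∈ Icc (0 : ℝ) 1, ContinuousOn (k s) (Icc 0 1))
    (hk' : ∀ s ∈ Icc (0 : ℝ) 1, ContinuousOn (k' s) (Icc 0 1))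
    (hdk : ∀ t ∈ Icc (0 : ℝ) 1, ∀ s ∈ Icc (0 : ℝ) 1,
      HasDerivWithinAt (fun u => k u t) (k' s t) (Icc 0 1) s)
    (hdk' : ∀ t ∈ Icc (0 : ℝ) 1, ∀ s ∈ Icc (0 : ℝ) 1,
      HasDerivWithinAt (fun u => k' u t) (k'' s t) (Icc 0 1) s)
    (hk'' : ∀ s ∈ Icc (0 : ℝ) 1, ∀ t ∈ Icc (0 : ℝ) 1, |k'' s t| ≤ C)
    {s : ℝ} (hs : s ∈ Icc (0 : ℝ) 1) :
    HasDerivWithinAt (fun s => ∫ t in (0 : ℝ)..1, k s t * e t)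
      (∫ t in (0 : ℝ)..1, k' s t * e t) (Icc 0 1) s := by
  have hint : ∀ φ : ℝ → ℝ, ContinuousOn φ (Icc 0 1) →
      IntervalIntegrable (fun t => φ t * e t) volume 0 1 :=
    fun φ hφ => he.continuousOn_mul (by rwa [uIcc_of_le zero_le_one])
  have hC : 0 ≤ C := (abs_nonneg _).trans (hk'' s hs s hs)
  refine hasDerivWithinAt_of_abs_sub_sub_le (C := C * B) fun s' hs' => ?_
  rw [← intervalIntegral.integral_sub (hint _ (hk s' hs')) (hint _ (hk s hs)),
    ← intervalIntegral.integral_const_mul, ← intervalIntegral.integral_sub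
      ((hint _ (hk s' hs')).sub (hint _ (hk s hs))) ((hint _ (hk' s hs)).const_mul _)]
  have hbound : ∀ t ∈ uIoc (0 : ℝ) 1,
      ‖k s' t * e t - k s t * e t - (s' - s) * (k' s t * e t)‖ ≤ C * (s' - s) ^ 2 * B := by
    intro t ht
    have ht' : t ∈ Icc (0 : ℝ) 1 := Ioc_subset_Icc_self (by rwa [uIoc_of_le zero_le_one] at ht)
    rw [Real.norm_eq_abs, show k s' t * e t - k s t * e t - (s' - s) * (k' s t * e t)
      = (k s' t - k s t - (s' - s) * k' s t) * e t by ring, abs_mul]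
    exact mul_le_mul (abs_sub_sub_mul_le_of_hasDerivWithinAt (convex_Icc 0 1)
      (hdk t ht') (hdk' t ht') (fun u hu => hk'' u hu t ht') hs hs') (heB t ht') (abs_nonneg _) (by positivity)
  simpa [mul_right_comm C] using intervalIntegral.norm_integral_le_of_norm_le_const hbound

section LagrangeBounds

open Polynomial

variable {ι : Type*} [DecidableEq ι] {s : Finset ι} {v : ι → ℝ}

lemma abs_eval_basis_le {i : ι} (hi : i ∈ s) {δ K t : ℝ} (hδ : 0 < δ)
    (hsep : ∀ j ∈ s, j ≠ i → δ ≤ |v i - v j|) (ht : ∀ j ∈ s, |t - v j| ≤ K * δ) :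
    |(Lagrange.basis s v i).eval t| ≤ K ^ (s.card - 1) := by
  have hK : 0 ≤ K := le_of_mul_le_mul_right (by simpa using (abs_nonneg _).trans (ht i hi)) hδ
  rw [Lagrange.basis, eval_prod, Finset.abs_prod, ← Finset.card_erase_of_mem hi,
    ← Finset.prod_const]
  refine Finset.prod_le_prod (fun _ _ => abs_nonneg _) fun j hj => ?_
  obtain ⟨hji, hj⟩ := Finset.mem_erase.mp hj
  simp only [Lagrange.basisDivisor, eval_mul, eval_C, eval_sub, eval_X, abs_mul, abs_inv]
  rw [inv_mul_le_iff₀ (hδ.trans_le (hsep j hj hji)), mul_comm]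
  exact (ht j hj).trans (mul_le_mul_of_nonneg_left (hsep j hj hji) hK)

lemma abs_eval_interpolate_le {δ K M t : ℝ} (hδ : 0 < δ)
    (hsep : ∀ i ∈ s, ∀ j ∈ s, j ≠ i → δ ≤ |v i - v j|)
    (ht : ∀ j ∈ s, |t - v j| ≤ K * δ) {c : ι → ℝ} (hc : ∀ i ∈ s, |c i| ≤ M) :
    |(Lagrange.interpolate s v c).eval t| ≤ s.card * K ^ (s.card - 1) * M := by
  rw [Lagrange.interpolate_apply, eval_finsetSum, mul_assoc, ← nsmul_eq_mul,
    ← Finset.sum_const]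
  refine (Finset.abs_sum_le_sum_abs _ _).trans (Finset.sum_le_sum fun i hi => ?_)
  rw [eval_mul, eval_C, abs_mul, mul_comm (K ^ _)]
  exact mul_le_mul (hc i hi) (abs_eval_basis_le hi hδ (hsep i hi) ht) (abs_nonneg _)
    ((abs_nonneg _).trans (hc i hi))

end LagrangeBounds

open Polynomial in
lemma sub_interpolate_eq_C_mul_nodal {F ι : Type*} [Field F] [DecidableEq ι] {s : Finset ι}
    {v : ι → F} (hvs : Set.InjOn v s) {P : F[X]} (hP : P.natDegree ≤ s.card) :
    P - Lagrange.interpolate s v (fun i => P.eval (v i))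
      = C (P.coeff s.card) * Lagrange.nodal s v := by
  have hdeg : (Lagrange.nodal s v).natDegree = s.card := Lagrange.natDegree_nodal
  suffices h : P - C (P.coeff s.card) * Lagrange.nodal s v
      = Lagrange.interpolate s v (fun i => P.eval (v i)) by
    rw [← h]; ring
  refine Lagrange.eq_interpolate_of_eval_eq _ hvs ?_ fun i hi => by
    simp [Lagrange.eval_nodal_at_node hi]
  rw [degree_lt_iff_coeff_zero]
  intro m hm
  rw [coeff_sub, coeff_C_mul]
  rcases (show s.card ≤ m by exact_mod_cast hm).eq_or_lt with rfl | hlt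
  · rw [← hdeg, Lagrange.nodal_monic.coeff_natDegree, hdeg, mul_one, sub_self]
  · have hnodal : (Lagrange.nodal s v).coeff m = 0 :=
      coeff_eq_zero_of_natDegree_lt (hdeg.trans_lt hlt)
    rw [coeff_eq_zero_of_natDegree_lt (hP.trans_lt hlt), hnodal, mul_zero, sub_zero]

lemma integral_eq_zero_of_odd {g : ℝ → ℝ} (hg : ∀ u, g (-u) = -g u) (c : ℝ) :
    ∫ u in -c..c, g u = 0 := by
  have h := intervalIntegral.integral_comp_neg (a := -c) (b := c) g
  simp only [hg, intervalIntegral.integral_neg, neg_neg] at h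
  linarith

noncomputable def equiNodes (a h : ℝ) (N i : ℕ) : ℝ := a + i * (h / N)

/-- A bound for the Lebesgue constant of interpolation at `N + 1` equispaced nodes. -/
noncomputable def equiLebesgueBound (N : ℕ) : ℝ := (N + 1) * (N : ℝ) ^ N

section EquiNodes

variable {a h : ℝ} {N : ℕ}

lemma equiLebesgueBound_nonneg (N : ℕ) : 0 ≤ equiLebesgueBound N := by
  unfold equiLebesgueBound; positivity

lemma abs_equiNodes_sub (i j : ℕ) :
    |equiNodes a h N i - equiNodes a h N j| = |(i : ℝ) - j| * |h / N| := by
  rw [← abs_mul]; unfold equiNodes; ring_nf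

lemma equiNodes_injective (hh : h ≠ 0) (hN : N ≠ 0) : Function.Injective (equiNodes a h N) := by
  intro i j hij
  have : (i : ℝ) * (h / N) = j * (h / N) := by simpa [equiNodes] using hij
  exact_mod_cast mul_right_cancel₀ (div_ne_zero hh (by exact_mod_cast hN)) this

lemma equiNodes_mem_Icc (hh : 0 ≤ h) (hN : N ≠ 0) {i : ℕ} (hi : i ≤ N) :
    equiNodes a h N i ∈ Icc a (a + h) := by
  unfold equiNodes
  have hNpos : (0 : ℝ) < N := by exact_mod_cast Nat.pos_of_ne_zero hN
  have hiN : (i : ℝ) * (h / N) ≤ N * (h / N) :=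
    mul_le_mul_of_nonneg_right (by exact_mod_cast hi) (by positivity)
  rw [mul_div_cancel₀ _ hNpos.ne'] at hiN
  exact ⟨le_add_of_nonneg_right (by positivity), add_le_add_right hiN a⟩

lemma abs_sub_equiNodes_le (hh : 0 ≤ h) (hN : N ≠ 0) {i : ℕ} (hi : i ≤ N) {t : ℝ}
    (ht : t ∈ Icc a (a + h)) : |t - equiNodes a h N i| ≤ h := by
  have hv := equiNodes_mem_Icc (a := a) hh hN hi
  rw [abs_le]; constructor <;> linarith [ht.1, ht.2, hv.1, hv.2]

lemma abs_eval_interpolate_equiNodes_le (hh : 0 < h) (hN : N ≠ 0) {c : ℕ → ℝ} {M t : ℝ}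
    (hc : ∀ i ∈ Finset.range (N + 1), |c i| ≤ M) (ht : t ∈ Icc a (a + h)) :
    |(Lagrange.interpolate (Finset.range (N + 1)) (equiNodes a h N) c).eval t|
      ≤ equiLebesgueBound N * M := by
  have hNpos : (0 : ℝ) < N := by exact_mod_cast Nat.pos_of_ne_zero hN
  have hδ : 0 < h / N := div_pos hh hNpos
  have hsep : ∀ i ∈ Finset.range (N + 1), ∀ j ∈ Finset.range (N + 1), j ≠ i →
      h / N ≤ |equiNodes a h N i - equiNodes a h N j| := by
    intro i _ j _ hji
    rw [abs_equiNodes_sub, abs_of_pos hδ]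
    refine le_mul_of_one_le_left hδ.le ?_
    have hij : (i : ℤ) - j ≠ 0 := sub_ne_zero.mpr (by exact_mod_cast hji.symm)
    exact_mod_cast Int.one_le_abs hij
  have hnear : ∀ j ∈ Finset.range (N + 1), |t - equiNodes a h N j| ≤ N * (h / N) := by
    intro j hj
    rw [mul_div_cancel₀ _ hNpos.ne']
    exact abs_sub_equiNodes_le hh.le hN (Nat.lt_succ_iff.mp (Finset.mem_range.mp hj)) ht
  have := abs_eval_interpolate_le hδ hsep hnear hc
  rwa [Finset.card_range, Nat.add_sub_cancel, Nat.cast_add_one] at this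

lemma abs_prod_sub_equiNodes_le (hh : 0 ≤ h) (hN : N ≠ 0) {t : ℝ} (ht : t ∈ Icc a (a + h)) :
    |∏ i ∈ Finset.range (N + 1), (t - equiNodes a h N i)| ≤ h ^ (N + 1) := by
  rw [Finset.abs_prod, ← Finset.card_range (N + 1), ← Finset.prod_const, Finset.card_range]
  exact Finset.prod_le_prod (fun _ _ => abs_nonneg _) fun i hi =>
    abs_sub_equiNodes_le hh hN (Nat.lt_succ_iff.mp (Finset.mem_range.mp hi)) ht

/-- With an odd number of equispaced nodes, the nodal polynomial is odd about the midpoint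
of `[a, a + h]`. -/
lemma integral_prod_sub_equiNodes_eq_zero {r : ℕ} (hr : r ≠ 0) :
    ∫ t in a..a + h, ∏ i ∈ Finset.range (2 * r + 1), (t - equiNodes a h (2 * r) i) = 0 := by
  set d : ℕ → ℝ := fun i => equiNodes a h (2 * r) i - (a + h / 2)
  have hd : ∀ i ≤ 2 * r, d (2 * r - i) = -d i := by
    intro i hi
    have hr' : (r : ℝ) ≠ 0 := by exact_mod_cast hr
    simp only [d, equiNodes]
    rw [Nat.cast_sub hi]
    field_simp
    push_cast
    ring
  set g : ℝ → ℝ := fun u => ∏ i ∈ Finset.range (2 * r + 1), (u - d i)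
  have hodd : ∀ u, g (-u) = -g u := by
    intro u
    calc g (-u) = ∏ i ∈ Finset.range (2 * r + 1), (-1) * (u - d (2 * r - i)) :=
          Finset.prod_congr rfl fun i hi => by
            rw [hd i (Nat.lt_succ_iff.mp (Finset.mem_range.mp hi))]; ring
      _ = (-1) ^ (2 * r + 1) * ∏ i ∈ Finset.range (2 * r + 1), (u - d i) := by
          rw [Finset.prod_mul_distrib, Finset.prod_const, Finset.card_range,
            ← Finset.prod_range_reflect (fun i => u - d i)]
          simp
      _ = -g u := by rw [(Odd.neg_one_pow ⟨r, rfl⟩), neg_one_mul]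
  have hshift := intervalIntegral.integral_comp_add_right
    (fun t => ∏ i ∈ Finset.range (2 * r + 1), (t - equiNodes a h (2 * r) i)) (a + h / 2)
    (a := -(h / 2)) (b := h / 2)
  rw [show -(h / 2) + (a + h / 2) = a by ring, show h / 2 + (a + h / 2) = a + h by ring]
    at hshift
  rw [← hshift, ← integral_eq_zero_of_odd hodd (h / 2)]
  exact intervalIntegral.integral_congr fun u _ => Finset.prod_congr rfl fun i _ => by
    simp only [d]; ring

end EquiNodes

section Taylor

open Polynomial

noncomputable def taylorPoly (x : ℝ → ℝ) (N : ℕ) (s : Set ℝ) (a : ℝ) : ℝ[X] :=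
  ∑ i ∈ Finset.range (N + 1), C (iteratedDerivWithin i x s a / i.factorial) * (X - C a) ^ i

variable {x : ℝ → ℝ} {N : ℕ} {s : Set ℝ} {a : ℝ}

lemma eval_taylorPoly (t : ℝ) : (taylorPoly x N s a).eval t = taylorWithinEval x N s a t := by
  simp only [taylorPoly, taylor_within_apply, eval_finsetSum, eval_mul, eval_C, eval_pow,
    eval_sub, eval_X, smul_eq_mul]
  exact Finset.sum_congr rfl fun i _ => by ring

lemma natDegree_taylorPoly_le : (taylorPoly x N s a).natDegree ≤ N :=
  natDegree_sum_le_of_forall_le _ _ fun i hi =>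
    (natDegree_C_mul_le _ _).trans <| (natDegree_pow_le_of_le i (natDegree_X_sub_C_le a)).trans
      (by simpa using Nat.lt_succ_iff.mp (Finset.mem_range.mp hi))

lemma coeff_taylorPoly_self :
    (taylorPoly x N s a).coeff N = iteratedDerivWithin N x s a / N.factorial := by
  have hlead : ((X - C a) ^ N).coeff N = 1 := by
    simpa [natDegree_pow] using ((monic_X_sub_C a).pow N).coeff_natDegree
  rw [taylorPoly, finsetSum_coeff, Finset.sum_range_succ, Finset.sum_eq_zero, zero_add,
    coeff_C_mul, hlead, mul_one]
  · intro i hi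
    refine coeff_eq_zero_of_natDegree_lt ((natDegree_C_mul_le _ _).trans_lt ?_)
    rw [natDegree_pow, natDegree_X_sub_C, mul_one]
    exact Finset.mem_range.mp hi

end Taylor

open Polynomial in
noncomputable def equiInterp (a h : ℝ) (N : ℕ) (y : ℝ → ℝ) : ℝ[X] :=
  Lagrange.interpolate (Finset.range (N + 1)) (equiNodes a h N) fun i => y (equiNodes a h N i)

section Cell

open Polynomial

variable {x : ℝ → ℝ} {a h : ℝ} {N : ℕ}

lemma abs_sub_taylorPoly_le (hx : ContDiffOn ℝ (N + 1) x (Icc 0 1)) (hh : 0 < h)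
    (hsub : Icc a (a + h) ⊆ Icc 0 1) {t : ℝ} (ht : t ∈ Icc a (a + h)) :
    |x t - (taylorPoly x N (Icc a (a + h)) a).eval t| ≤ cknorm (N + 1) x * h ^ (N + 1) := by
  have hah : a < a + h := lt_add_of_pos_right a hh
  have hrem := taylor_mean_remainder_bound hah.le (hx.mono hsub) ht fun y hy => by
    rw [Real.norm_eq_abs]
    exact abs_iteratedDerivWithin_le_cknorm le_rfl (by exact_mod_cast hx) hah hsub hy
  rw [Real.norm_eq_abs, ← eval_taylorPoly] at hrem
  have hta : 0 ≤ t - a := sub_nonneg.mpr ht.1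
  refine hrem.trans <| (div_le_self (mul_nonneg (cknorm_nonneg (by exact_mod_cast hx))
    (pow_nonneg hta _)) (by exact_mod_cast N.factorial_pos)).trans ?_
  gcongr
  · exact cknorm_nonneg (by exact_mod_cast hx)
  · linarith [ht.2]

lemma abs_coeff_taylorPoly_le (hx : ContDiffOn ℝ (N + 1) x (Icc 0 1)) (hh : 0 < h)
    (hsub : Icc a (a + h) ⊆ Icc 0 1) :
    |(taylorPoly x N (Icc a (a + h)) a).coeff N| ≤ cknorm (N + 1) x := by
  have hah : a < a + h := lt_add_of_pos_right a hh
  rw [coeff_taylorPoly_self, abs_div, Nat.abs_cast]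
  exact (div_le_self (abs_nonneg _) (by exact_mod_cast N.factorial_pos)).trans
    (abs_iteratedDerivWithin_le_cknorm N.le_succ (by exact_mod_cast hx) hah hsub
      (left_mem_Icc.mpr hah.le))

lemma abs_sub_equiInterp_le {k : ℕ} (hx : ContDiffOn ℝ k x (Icc 0 1)) (hh : 0 < h)
    (hN : N ≠ 0) (hsub : Icc a (a + h) ⊆ Icc 0 1) {t : ℝ} (ht : t ∈ Icc a (a + h)) :
    |x t - (equiInterp a h N x).eval t| ≤ (1 + equiLebesgueBound N) * cknorm k x := by
  have hinterp := abs_eval_interpolate_equiNodes_le hh hN (c := fun i => x (equiNodes a h N i))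
    (fun i hi => abs_le_cknorm hx
      (hsub (equiNodes_mem_Icc hh.le hN (Nat.lt_succ_iff.mp (Finset.mem_range.mp hi))))) ht
  calc |x t - (equiInterp a h N x).eval t| ≤ |x t| + |(equiInterp a h N x).eval t| :=
        abs_sub _ _
    _ ≤ cknorm k x + equiLebesgueBound N * cknorm k x :=
        add_le_add (abs_le_cknorm hx (hsub ht)) hinterp
    _ = (1 + equiLebesgueBound N) * cknorm k x := by ring

/-- `c` is the leading coefficient of the Taylor polynomial of degree `N + 1` at `a`. -/
lemma exists_abs_sub_equiInterp_sub_mul_prod_le (hx : ContDiffOn ℝ (N + 2) x (Icc 0 1))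
    (hh : 0 < h) (hN : N ≠ 0) (hsub : Icc a (a + h) ⊆ Icc 0 1) :
    ∃ c : ℝ, |c| ≤ cknorm (N + 2) x ∧ ∀ t ∈ Icc a (a + h),
      |x t - (equiInterp a h N x).eval t
          - c * ∏ i ∈ Finset.range (N + 1), (t - equiNodes a h N i)|
        ≤ (1 + equiLebesgueBound N) * cknorm (N + 2) x * h ^ (N + 2) := by
  set P := taylorPoly x (N + 1) (Icc a (a + h)) a
  have hnodal := sub_interpolate_eq_C_mul_nodal (s := Finset.range (N + 1))
    ((equiNodes_injective (a := a) hh.ne' hN).injOn) (P := P)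
    (by simpa using natDegree_taylorPoly_le)
  rw [Finset.card_range] at hnodal
  refine ⟨P.coeff (N + 1), abs_coeff_taylorPoly_le hx hh hsub, fun t ht => ?_⟩
  have htaylor : ∀ y ∈ Icc a (a + h), |x y - P.eval y| ≤ cknorm (N + 2) x * h ^ (N + 2) :=
    fun y hy => abs_sub_taylorPoly_le hx hh hsub hy
  set e : ℕ → ℝ := fun i => P.eval (equiNodes a h N i) - x (equiNodes a h N i)
  have hlin : Lagrange.interpolate (Finset.range (N + 1)) (equiNodes a h N) e
      = P - C (P.coeff (N + 1)) * Lagrange.nodal (Finset.range (N + 1)) (equiNodes a h N)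
        - equiInterp a h N x := by
    rw [← hnodal, sub_sub_cancel]
    exact map_sub (Lagrange.interpolate _ _) _ _
  have hdecomp : x t - (equiInterp a h N x).eval t
      - P.coeff (N + 1) * ∏ i ∈ Finset.range (N + 1), (t - equiNodes a h N i)
      = (x t - P.eval t)
        + (Lagrange.interpolate (Finset.range (N + 1)) (equiNodes a h N) e).eval t := by
    rw [hlin]
    simp only [eval_sub, eval_mul, eval_C, Lagrange.eval_nodal]
    ring
  have hinterp := abs_eval_interpolate_equiNodes_le hh hN (c := e) (fun i hi => by
    rw [abs_sub_comm]
    exact htaylor _ (equiNodes_mem_Icc hh.le hN (Nat.lt_succ_iff.mp (Finset.mem_range.mp hi))))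
    ht
  rw [hdecomp]
  linarith [abs_add_le (x t - P.eval t)
    ((Lagrange.interpolate (Finset.range (N + 1)) (equiNodes a h N) e).eval t), htaylor t ht]

lemma abs_integral_mul_prod_sub_equiNodes_le {r : ℕ} (hr : r ≠ 0) (hh : 0 < h)
    {g g' : ℝ → ℝ} {C : ℝ}
    (hdg : ∀ t ∈ Icc a (a + h), HasDerivWithinAt g (g' t) (Icc a (a + h)) t)
    (hg' : ∀ t ∈ Icc a (a + h), |g' t| ≤ C) :
    |∫ t in a..a + h, g t * ∏ i ∈ Finset.range (2 * r + 1), (t - equiNodes a h (2 * r) i)|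
      ≤ C * h ^ (2 * r + 3) := by
  have hah : a ≤ a + h := le_add_of_nonneg_right hh.le
  have hg : ContinuousOn g (Icc a (a + h)) := fun t ht => (hdg t ht).continuousWithinAt
  have hC : 0 ≤ C := (abs_nonneg _).trans (hg' a (left_mem_Icc.mpr hah))
  set Φ := fun t => ∏ i ∈ Finset.range (2 * r + 1), (t - equiNodes a h (2 * r) i)
  have hΦ : ContinuousOn Φ (Icc a (a + h)) := by fun_prop
  have hsplit : ∫ t in a..a + h, g t * Φ t
      = (∫ t in a..a + h, (g t - g a) * Φ t) + g a * ∫ t in a..a + h, Φ t := by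
    have h1 : IntervalIntegrable (fun t => (g t - g a) * Φ t) volume a (a + h) :=
      ((hg.sub continuousOn_const).mul hΦ).intervalIntegrable_of_Icc hah
    have h2 : IntervalIntegrable (fun t => g a * Φ t) volume a (a + h) :=
      (continuousOn_const.mul hΦ).intervalIntegrable_of_Icc hah
    rw [← intervalIntegral.integral_const_mul, ← intervalIntegral.integral_add h1 h2]
    exact intervalIntegral.integral_congr fun t _ => by ring
  -- `∫ Φ = 0` lets us replace `g` by `g - g a`, which is `O(h)` on the cell.
  rw [hsplit, integral_prod_sub_equiNodes_eq_zero hr, mul_zero, add_zero]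
  have hbound : ∀ t ∈ uIoc a (a + h), ‖(g t - g a) * Φ t‖ ≤ C * h * h ^ (2 * r + 1) := by
    intro t ht
    have ht' : t ∈ Icc a (a + h) := Ioc_subset_Icc_self (by rwa [uIoc_of_le hah] at ht)
    have hmvt := (convex_Icc a (a + h)).norm_image_sub_le_of_norm_hasDerivWithin_le hdg hg'
      (left_mem_Icc.mpr hah) ht'
    rw [Real.norm_eq_abs, Real.norm_eq_abs, abs_of_nonneg (sub_nonneg.mpr ht'.1)] at hmvt
    rw [Real.norm_eq_abs, abs_mul]
    refine mul_le_mul (hmvt.trans ?_) (abs_prod_sub_equiNodes_le hh.le (by omega) ht')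
      (abs_nonneg _) (by positivity)
    exact mul_le_mul_of_nonneg_left (by linarith [ht'.2]) hC
  have := intervalIntegral.norm_integral_le_of_norm_le_const hbound
  rw [Real.norm_eq_abs, add_sub_cancel_left, abs_of_pos hh] at this
  exact this.trans_eq (by ring)

lemma abs_integral_mul_sub_equiInterp_le {r : ℕ} (hr : r ≠ 0)
    (hx : ContDiffOn ℝ (2 * r + 2) x (Icc 0 1)) (hh : 0 < h) (hsub : Icc a (a + h) ⊆ Icc 0 1)
    {g g' : ℝ → ℝ} {C : ℝ}
    (hdg : ∀ t ∈ Icc a (a + h), HasDerivWithinAt g (g' t) (Icc a (a + h)) t)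
    (hgC : ∀ t ∈ Icc a (a + h), |g t| ≤ C) (hg'C : ∀ t ∈ Icc a (a + h), |g' t| ≤ C) :
    |∫ t in a..a + h, g t * (x t - (equiInterp a h (2 * r) x).eval t)|
      ≤ C * (2 + equiLebesgueBound (2 * r)) * cknorm (2 * r + 2) x * h ^ (2 * r + 2) * h := by
  have hah : a ≤ a + h := le_add_of_nonneg_right hh.le
  have hg : ContinuousOn g (Icc a (a + h)) := fun t ht => (hdg t ht).continuousWithinAt
  have hC : 0 ≤ C := (abs_nonneg _).trans (hgC a (left_mem_Icc.mpr hah))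
  have hM : 0 ≤ cknorm (2 * r + 2) x := cknorm_nonneg (by exact_mod_cast hx)
  obtain ⟨c, hc, hR⟩ := exists_abs_sub_equiInterp_sub_mul_prod_le (N := 2 * r)
    (by exact_mod_cast hx) hh (by omega) hsub
  set Φ := fun t => ∏ i ∈ Finset.range (2 * r + 1), (t - equiNodes a h (2 * r) i)
  set R := fun t => x t - (equiInterp a h (2 * r) x).eval t - c * Φ t
  have hRc : ContinuousOn R (Icc a (a + h)) :=
    ((hx.continuousOn.mono hsub).sub (Polynomial.continuous _).continuousOn).sub (by fun_prop)
  have hsplit : ∫ t in a..a + h, g t * (x t - (equiInterp a h (2 * r) x).eval t)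
      = (∫ t in a..a + h, g t * R t) + c * ∫ t in a..a + h, g t * Φ t := by
    have h1 : IntervalIntegrable (fun t => g t * R t) volume a (a + h) :=
      (hg.mul hRc).intervalIntegrable_of_Icc hah
    have h2 : IntervalIntegrable (fun t => c * (g t * Φ t)) volume a (a + h) :=
      (continuousOn_const.mul (hg.mul (by fun_prop))).intervalIntegrable_of_Icc hah
    rw [← intervalIntegral.integral_const_mul, ← intervalIntegral.integral_add h1 h2]
    exact intervalIntegral.integral_congr fun t _ => by simp only [R]; ring
  have hbound : ∀ t ∈ uIoc a (a + h), ‖g t * R t‖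
      ≤ C * ((1 + equiLebesgueBound (2 * r)) * cknorm (2 * r + 2) x * h ^ (2 * r + 2)) := by
    intro t ht
    have ht' : t ∈ Icc a (a + h) := Ioc_subset_Icc_self (by rwa [uIoc_of_le hah] at ht)
    rw [Real.norm_eq_abs, abs_mul]
    exact mul_le_mul (hgC t ht') (hR t ht') (abs_nonneg _) hC
  have hRint := intervalIntegral.norm_integral_le_of_norm_le_const hbound
  rw [Real.norm_eq_abs, add_sub_cancel_left, abs_of_pos hh] at hRint
  have hΦint := abs_integral_mul_prod_sub_equiNodes_le hr hh hdg hg'C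
  rw [hsplit]
  refine (abs_add_le _ _).trans ?_
  rw [abs_mul]
  have := mul_le_mul hc hΦint (abs_nonneg _) hM
  rw [show h ^ (2 * r + 3) = h ^ (2 * r + 2) * h by ring] at this
  linarith

end Cell

section Projection

variable {n r : ℕ} {x : ℝ → ℝ}

lemma interpPoly_succ (k : ℕ) :
    interpPoly n r (k + 1) x = equiInterp (k / n) (1 / n) (2 * r) x := by
  have htau : tau n r (k + 1) = equiNodes (k / n) (1 / n) (2 * r) := by
    funext i; simp only [tau, equiNodes]; push_cast; ring
  rw [interpPoly, equiInterp, htau]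

lemma cell_subset_Icc {k : ℕ} (hk : k < n) : Icc ((k : ℝ) / n) (k / n + 1 / n) ⊆ Icc 0 1 := by
  have hn : (0 : ℝ) < n := by exact_mod_cast (Nat.zero_le k).trans_lt hk
  refine Icc_subset_Icc (by positivity) ?_
  rw [← add_div, div_le_one hn]
  exact_mod_cast hk

lemma Qn_eq_of_mem_Ico {k : ℕ} (hk : k < n) {t : ℝ}
    (ht : t ∈ Ico ((k : ℝ) / n) (k / n + 1 / n)) :
    Qn n r x t = (equiInterp (k / n) (1 / n) (2 * r) x).eval t := by
  have hn : (0 : ℝ) < n := by exact_mod_cast (Nat.zero_le k).trans_lt hk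
  have hfloor : ⌊t * n⌋₊ = k := by
    rw [← add_div] at ht
    rw [Nat.floor_eq_iff (mul_nonneg ((by positivity : (0 : ℝ) ≤ k / n).trans ht.1) hn.le)]
    exact ⟨(div_le_iff₀ hn).mp ht.1, (lt_div_iff₀ hn).mp ht.2⟩
  rw [Qn, hfloor, min_eq_right hk, interpPoly_succ]

lemma exists_Qn_eq_eval_equiInterp (hn : 1 ≤ n) {t : ℝ} (ht : t ∈ Icc (0 : ℝ) 1) :
    ∃ k < n, t ∈ Icc ((k : ℝ) / n) (k / n + 1 / n) ∧
      Qn n r x t = (equiInterp (k / n) (1 / n) (2 * r) x).eval t := by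
  have hnpos : (0 : ℝ) < n := by exact_mod_cast hn
  rcases ht.2.lt_or_eq with ht1 | rfl
  · have hk : ⌊t * n⌋₊ < n := (Nat.floor_lt (mul_nonneg ht.1 hnpos.le)).mpr
      (by nlinarith)
    have hmem : t ∈ Ico ((⌊t * n⌋₊ : ℝ) / n) (⌊t * n⌋₊ / n + 1 / n) := by
      rw [← add_div, mem_Ico, div_le_iff₀ hnpos, lt_div_iff₀ hnpos]
      exact ⟨Nat.floor_le (mul_nonneg ht.1 hnpos.le), Nat.lt_floor_add_one _⟩
    exact ⟨_, hk, Ico_subset_Icc_self hmem, Qn_eq_of_mem_Ico hk hmem⟩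
  · -- at `t = 1` the floor overshoots and the `min` in `Qn` selects the last cell
    obtain ⟨m, rfl⟩ := Nat.exists_eq_add_of_le' hn
    refine ⟨m, m.lt_succ_self, ?_, ?_⟩
    · rw [← add_div, ← Nat.cast_add_one]
      exact ⟨div_le_one_of_le₀ (by push_cast; linarith) hnpos.le, (div_self hnpos.ne').ge⟩
    · rw [Qn, one_mul, Nat.floor_natCast, min_eq_left (Nat.le_succ _), interpPoly_succ]

lemma abs_sub_Qn_le {k : ℕ} (hx : ContDiffOn ℝ k x (Icc 0 1)) (hn : 1 ≤ n) (hr : r ≠ 0)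
    {t : ℝ} (ht : t ∈ Icc (0 : ℝ) 1) :
    |x t - Qn n r x t| ≤ (1 + equiLebesgueBound (2 * r)) * cknorm k x := by
  obtain ⟨j, hj, htj, hQ⟩ := exists_Qn_eq_eval_equiInterp (r := r) (x := x) hn ht
  rw [hQ]
  exact abs_sub_equiInterp_le hx (by positivity) (by omega) (cell_subset_Icc hj) htj

lemma Qn_ae_eq_on_cell {k : ℕ} (hk : k < n) :
    ∀ᵐ t, t ∈ uIoc ((k : ℝ) / n) (k / n + 1 / n) →
      Qn n r x t = (equiInterp (k / n) (1 / n) (2 * r) x).eval t := by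
  have hn : (0 : ℝ) < n := by exact_mod_cast (Nat.zero_le k).trans_lt hk
  filter_upwards [Measure.ae_ne volume ((k : ℝ) / n + 1 / n)] with t hne ht
  rw [uIoc_of_le (by simp [hn.le])] at ht
  exact Qn_eq_of_mem_Ico hk ⟨ht.1.le, lt_of_le_of_ne ht.2 hne⟩

lemma intervalIntegrable_sub_Qn_cell (hxc : ContinuousOn x (Icc 0 1)) {k : ℕ} (hk : k < n) :
    IntervalIntegrable (fun t => x t - Qn n r x t) volume (k / n) (k / n + 1 / n) := by
  have hn : (0 : ℝ) < n := by exact_mod_cast (Nat.zero_le k).trans_lt hk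
  have hcell : ContinuousOn (fun t => x t - (equiInterp (k / n) (1 / n) (2 * r) x).eval t)
      (uIcc ((k : ℝ) / n) (k / n + 1 / n)) := by
    rw [uIcc_of_le (by simp [hn.le])]
    exact (hxc.mono (cell_subset_Icc hk)).sub (Polynomial.continuous _).continuousOn
  rw [intervalIntegrable_iff]
  refine (intervalIntegrable_iff.mp (hcell.intervalIntegrable (μ := volume))).congr ?_
  filter_upwards [ae_restrict_of_ae (Qn_ae_eq_on_cell (r := r) (x := x) hk),
    ae_restrict_mem measurableSet_uIoc] with t hQ ht
  rw [hQ ht]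

lemma intervalIntegrable_sub_Qn (hn : 1 ≤ n) (hxc : ContinuousOn x (Icc 0 1)) :
    IntervalIntegrable (fun t => x t - Qn n r x t) volume 0 1 := by
  have hnpos : (0 : ℝ) < n := by exact_mod_cast hn
  have := IntervalIntegrable.trans_iterate (a := fun k : ℕ => (k : ℝ) / n) (n := n)
    fun k hk => by simpa [add_div] using intervalIntegrable_sub_Qn_cell (r := r) hxc hk
  simpa [hnpos.ne'] using this

lemma integral_mul_sub_Qn_eq_sum (hn : 1 ≤ n) (hxc : ContinuousOn x (Icc 0 1)) {φ : ℝ → ℝ}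
    (hφ : ContinuousOn φ (Icc 0 1)) :
    ∫ t in (0 : ℝ)..1, φ t * (x t - Qn n r x t) = ∑ k ∈ Finset.range n,
      ∫ t in (k : ℝ) / n..k / n + 1 / n,
        φ t * (x t - (equiInterp (k / n) (1 / n) (2 * r) x).eval t) := by
  have hnpos : (0 : ℝ) < n := by exact_mod_cast hn
  have hsum := intervalIntegral.sum_integral_adjacent_intervals (a := fun k : ℕ => (k : ℝ) / n)
    (f := fun t => φ t * (x t - Qn n r x t)) (μ := volume) (n := n) fun k hk => by
      have hle : (k : ℝ) / n ≤ k / n + 1 / n := by simp [hnpos.le]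
      rw [Nat.cast_succ, add_div]
      exact (intervalIntegrable_sub_Qn_cell hxc hk).continuousOn_mul
        (hφ.mono ((uIcc_of_le hle).subset.trans (cell_subset_Icc hk)))
  simp only [Nat.cast_zero, zero_div, div_self hnpos.ne'] at hsum
  rw [← hsum]
  refine Finset.sum_congr rfl fun k hk => ?_
  rw [Nat.cast_succ, add_div]
  exact intervalIntegral.integral_congr_ae <|
    (Qn_ae_eq_on_cell (Finset.mem_range.mp hk)).mono fun t hQ ht => by rw [hQ ht]

lemma abs_integral_mul_sub_Qn_le (hn : 1 ≤ n) (hr : r ≠ 0)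
    (hx : ContDiffOn ℝ (2 * r + 2) x (Icc 0 1)) {g g' : ℝ → ℝ} {C : ℝ}
    (hdg : ∀ t ∈ Icc (0 : ℝ) 1, HasDerivWithinAt g (g' t) (Icc 0 1) t)
    (hgC : ∀ t ∈ Icc (0 : ℝ) 1, |g t| ≤ C)
    (hg'C : ∀ t ∈ Icc (0 : ℝ) 1, |g' t| ≤ C) :
    |∫ t in (0 : ℝ)..1, g t * (x t - Qn n r x t)|
      ≤ C * (2 + equiLebesgueBound (2 * r)) * cknorm (2 * r + 2) x * (1 / n) ^ (2 * r + 2) := by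
  have hnpos : (0 : ℝ) < n := by exact_mod_cast hn
  rw [integral_mul_sub_Qn_eq_sum hn hx.continuousOn fun t ht => (hdg t ht).continuousWithinAt]
  refine (Finset.abs_sum_le_sum_abs _ _).trans ?_
  calc _ ≤ ∑ _k ∈ Finset.range n,
        C * (2 + equiLebesgueBound (2 * r)) * cknorm (2 * r + 2) x * (1 / n) ^ (2 * r + 2)
          * (1 / n) := by
        refine Finset.sum_le_sum fun k hk => ?_
        have hsub := cell_subset_Icc (Finset.mem_range.mp hk)
        exact abs_integral_mul_sub_equiInterp_le hr hx (by positivity) hsub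
          (fun t ht => (hdg t (hsub ht)).mono hsub) (fun t ht => hgC t (hsub ht))
          (fun t ht => hg'C t (hsub ht))
    _ = _ := by
        rw [Finset.sum_const, Finset.card_range, nsmul_eq_mul]
        field_simp

end Projection

/-- If all mixed partials `D^{(α,β)}κ` (given by the family `κd`) of total order `≤ 2r+3`
exist, are continuous on `[0,1]²`, and are bounded by `C₂`, then there is a constant
`C₃ > 0` depending only on `r` and `C₂` (independent of `n`) such that
`‖(K(x − Q_n x))^{(2r+1)}‖_∞ ≤ C₃ ‖x‖_{2r+2,∞} h^{2r+2}` for all `x ∈ C^{2r+2}[0,1]`. -/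
theorem stmt_11 (r : ℕ) (hr : 1 ≤ r) (C₂ : ℝ) (hC₂ : 0 < C₂) :
    ∃ C₃ : ℝ, 0 < C₃ ∧
      ∀ κ : ℝ → ℝ → ℝ, ∀ κd : ℕ → ℕ → ℝ → ℝ → ℝ,
        κd 0 0 = κ →
        (∀ α β : ℕ, α + β + 1 ≤ 2 * r + 3 → ∀ t ∈ Set.Icc (0:ℝ) 1, ∀ s ∈ Set.Icc (0:ℝ) 1,
          HasDerivWithinAt (fun u => κd α β u t) (κd (α + 1) β s t) (Set.Icc 0 1) s) →
        (∀ α β : ℕ, α + β + 1 ≤ 2 * r + 3 → ∀ s ∈ Set.Icc (0:ℝ) 1, ∀ t ∈ Set.Icc (0:ℝ) 1,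
          HasDerivWithinAt (fun u => κd α β s u) (κd α (β + 1) s t) (Set.Icc 0 1) t) →
        (∀ α β : ℕ, α + β ≤ 2 * r + 3 →
          ContinuousOn (fun q : ℝ × ℝ => κd α β q.1 q.2) (Set.Icc 0 1 ×ˢ Set.Icc 0 1)) →
        (∀ α β : ℕ, α + β ≤ 2 * r + 3 →
          ∀ s ∈ Set.Icc (0:ℝ) 1, ∀ t ∈ Set.Icc (0:ℝ) 1, |κd α β s t| ≤ C₂) →
        ∀ n : ℕ, 1 ≤ n → ∀ x : ℝ → ℝ, ContDiffOn ℝ (2 * r + 2) x (Set.Icc 0 1) →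
          supNorm (iteratedDerivWithin (2 * r + 1)
              (Kop κ (fun t => x t - Qn n r x t)) (Set.Icc 0 1)) ≤
            C₃ * cknorm (2 * r + 2) x * ((1 : ℝ) / n) ^ (2 * r + 2) := by
  refine ⟨C₂ * (2 + equiLebesgueBound (2 * r)),
    mul_pos hC₂ (by linarith [equiLebesgueBound_nonneg (2 * r)]), ?_⟩
  rintro κ κd rfl hds hdt - hbound n hn x hx
  have hr0 : r ≠ 0 := Nat.one_le_iff_ne_zero.mp hr
  set e := fun t => x t - Qn n r x t
  have hslice : ∀ α ≤ 2 * r + 2, ∀ s ∈ Icc (0 : ℝ) 1,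
      ContinuousOn (κd α 0 s) (Icc 0 1) :=
    fun α hα s hs t ht => (hdt α 0 (by omega) s hs t ht).continuousWithinAt
  have hderiv : ∀ m < 2 * r + 1, ∀ s ∈ Icc (0 : ℝ) 1,
      HasDerivWithinAt (Kop (κd m 0) e) (Kop (κd (m + 1) 0) e s) (Icc 0 1) s :=
    fun m hm s hs => hasDerivWithinAt_integral_mul (intervalIntegrable_sub_Qn hn hx.continuousOn)
      (fun t ht => abs_sub_Qn_le (k := 2 * r + 2) (by exact_mod_cast hx) hn hr0 ht)
      (hslice m (by omega)) (hslice (m + 1) (by omega)) (hds m 0 (by omega))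
      (hds (m + 1) 0 (by omega)) (hbound (m + 2) 0 (by omega)) hs
  have hiter := eqOn_iteratedDerivWithin_of_hasDerivWithinAt (F := fun m => Kop (κd m 0) e)
    (uniqueDiffOn_Icc one_pos) hderiv (2 * r + 1) le_rfl
  refine supNorm_le fun s hs => ?_
  rw [hiter hs]
  exact abs_integral_mul_sub_Qn_le hn hr0 hx (hdt (2 * r + 1) 0 (by omega) s hs)
    (hbound (2 * r + 1) 0 (by omega) s hs) (hbound (2 * r + 1) 1 (by omega) s hs)
end
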